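/- Let Γ(x,t) = (4πt)^{−n/2} exp(−|x|²/(4t)) be the heat kernel in ℝⁿ and S_R the sphere of radius R > 0 centered at the origin. For every σ ∈ (0,1) and every μ with 1/2 < μ < 1 there exists a constant C₀ > 0 such that for all x, y ∈ S_R with x ≠ y and all t > τ: |∂Γ/∂η_y (x−y, t−τ)| ≤ C₀ (t−τ)^{−μ} |x−y|^{−(n+1−2μ−σ)}, where ∂/∂η_y is the derivative with respect to y in the direction of the outward unit normal y/R. -/

import Mathlib

open MeasureTheory Metric Real Set Filter
open scoped Topology

noncomputable section

/-- The Laplacian of a function `f : ℝⁿ → ℝ`, as the sum of the second partial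
derivatives in the coordinate directions. -/
def lap (n : ℕ) (f : EuclideanSpace ℝ (Fin n) → ℝ) (x : EuclideanSpace ℝ (Fin n)) : ℝ :=
  ∑ i : Fin n,
    fderiv ℝ (fun y => fderiv ℝ f y (EuclideanSpace.single i 1)) x (EuclideanSpace.single i 1)

/-- The fundamental solution (heat kernel) of the heat equation on `ℝⁿ`,
extended by `0` for nonpositive times. -/
def heatKernel (n : ℕ) (x : EuclideanSpace ℝ (Fin n)) (t : ℝ) : ℝ :=
  if 0 < t then (4 * Real.pi * t) ^ (-(n : ℝ) / 2) * Real.exp (-‖x‖ ^ 2 / (4 * t)) else 0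

/-!
For `x, y` on the sphere, `⟪x - y, y⟫ = -‖x - y‖² / 2`, so the normal derivative of
`Γ(x - ·, s)` at `y` is `-Γ(x - y, s) ‖x - y‖² / (4 s R)`. With `a = ‖x - y‖² / (4 s)` and
`k = n/2 + 1 - μ`, the bound `a ^ k e^{-a} ≤ k ^ k e^{-k}` turns the Gaussian factor into
`s^{-μ} ‖x - y‖^{2μ - n}`, and the surplus factor `‖x - y‖^{1 - σ}` is at most `(2R)^{1 - σ}`.
-/

open scoped InnerProductSpace

lemma rpow_mul_exp_neg_le {a k : ℝ} (ha : 0 ≤ a) (hk : 0 < k) :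
    a ^ k * exp (-a) ≤ k ^ k * exp (-k) := by
  have hy : 0 ≤ a / k * exp (-(a / k)) := by positivity
  have key := rpow_le_rpow hy (mul_exp_neg_le_exp_neg_one (a / k)) hk.le
  rw [mul_rpow (by positivity) (exp_pos _).le, ← exp_mul, ← exp_mul,
    div_rpow ha hk.le, neg_mul, div_mul_cancel₀ _ hk.ne', neg_one_mul,
    div_mul_eq_mul_div, div_le_iff₀ (rpow_pos_of_pos hk k)] at key
  linarith

lemma exp_neg_le_mul_rpow_neg {a k : ℝ} (ha : 0 < a) (hk : 0 < k) :
    exp (-a) ≤ k ^ k * exp (-k) * a ^ (-k) := by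
  rw [rpow_neg ha.le, ← div_eq_mul_inv, le_div_iff₀ (rpow_pos_of_pos ha k), mul_comm]
  exact rpow_mul_exp_neg_le ha.le hk

lemma real_inner_sub_self_of_norm_eq {E : Type*} [NormedAddCommGroup E]
    [InnerProductSpace ℝ E] {x y : E} (h : ‖x‖ = ‖y‖) : ⟪x - y, y⟫_ℝ = -‖x - y‖ ^ 2 / 2 := by
  rw [inner_sub_left, real_inner_self_eq_norm_sq, norm_sub_sq_real, h]
  ring

lemma heatKernel_nonneg (n : ℕ) (x : EuclideanSpace ℝ (Fin n)) (s : ℝ) :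
    0 ≤ heatKernel n x s := by
  unfold heatKernel
  split_ifs <;> positivity

lemma fderiv_heatKernel_sub_apply (n : ℕ) (x y v : EuclideanSpace ℝ (Fin n)) {s : ℝ}
    (hs : 0 < s) :
    fderiv ℝ (fun z => heatKernel n (x - z) s) y v =
      heatKernel n (x - y) s * (⟪x - y, v⟫_ℝ / (2 * s)) := by
  have hfun : (fun z => heatKernel n (x - z) s) =
      fun z => (4 * π * s) ^ (-(n : ℝ) / 2) * exp (‖x - z‖ ^ 2 * (-(4 * s)⁻¹)) := by
    funext z
    rw [heatKernel, if_pos hs]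
    ring_nf
  have hderiv : HasFDerivAt (fun z => (4 * π * s) ^ (-(n : ℝ) / 2) *
      exp (‖x - z‖ ^ 2 * (-(4 * s)⁻¹))) _ y :=
    ((((hasFDerivAt_id y).const_sub x).norm_sq.mul_const _).exp).const_mul _
  rw [hfun, hderiv.fderiv, heatKernel, if_pos hs]
  simp only [smul_apply, ContinuousLinearMap.comp_apply, neg_apply, ContinuousLinearMap.id_apply,
    innerSL_apply_apply, inner_neg_right, smul_eq_mul, id]
  field_simp
  ring

lemma fderiv_heatKernel_sub_normal {n : ℕ} {R s : ℝ} {x y : EuclideanSpace ℝ (Fin n)}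
    (hx : x ∈ sphere 0 R) (hy : y ∈ sphere 0 R) (hs : 0 < s) :
    fderiv ℝ (fun z => heatKernel n (x - z) s) y (R⁻¹ • y) =
      -(heatKernel n (x - y) s * (‖x - y‖ ^ 2 / s) / (4 * R)) := by
  have hxy : ‖x‖ = ‖y‖ := by rw [mem_sphere_zero_iff_norm.1 hx, mem_sphere_zero_iff_norm.1 hy]
  rw [fderiv_heatKernel_sub_apply n x y _ hs, real_inner_smul_right,
    real_inner_sub_self_of_norm_eq hxy]
  ring

lemma heatKernel_mul_norm_sq_div_le (n : ℕ) {μ s : ℝ} (hμ : μ < n / 2 + 1) (hs : 0 < s)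
    {x : EuclideanSpace ℝ (Fin n)} (hx : x ≠ 0) :
    heatKernel n x s * (‖x‖ ^ 2 / s) ≤
      (4 * π) ^ (-(n : ℝ) / 2) * (4 * ((n : ℝ) / 2 + 1 - μ)) ^ ((n : ℝ) / 2 + 1 - μ) *
        exp (-((n : ℝ) / 2 + 1 - μ)) * s ^ (-μ) * ‖x‖ ^ (2 * μ - n) := by
  set k : ℝ := (n : ℝ) / 2 + 1 - μ with hk_def
  set r := ‖x‖
  have hk : 0 < k := by linarith
  have hr : 0 < r := norm_pos_iff.2 hx
  have hgauss :
      exp (-r ^ 2 / (4 * s)) ≤ k ^ k * exp (-k) * (4 ^ k * s ^ k * r ^ (-(2 * k))) := by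
    have ha : 0 < r ^ 2 / (4 * s) := by positivity
    have ha_pow : (r ^ 2 / (4 * s)) ^ (-k) = 4 ^ k * s ^ k * r ^ (-(2 * k)) := by
      rw [rpow_neg ha.le, div_rpow (by positivity) (by positivity), mul_rpow (by norm_num) hs.le,
        ← rpow_natCast r 2, ← rpow_mul hr.le, rpow_neg hr.le]
      push_cast
      field_simp
    rw [neg_div, ← ha_pow]
    exact exp_neg_le_mul_rpow_neg ha hk
  have hs_pow : s ^ (-(n : ℝ) / 2) * s ^ k * s⁻¹ = s ^ (-μ) := by
    rw [← rpow_neg_one, ← rpow_add hs, ← rpow_add hs]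
    congr 1; ring
  have hr_pow : r ^ (-(2 * k)) * r ^ 2 = r ^ (2 * μ - n) := by
    rw [← rpow_natCast r 2, ← rpow_add hr]
    congr 1; push_cast; ring
  rw [heatKernel, if_pos hs, mul_rpow (by positivity) hs.le, ← hs_pow, ← hr_pow,
    mul_rpow (by norm_num) hk.le]
  calc (4 * π) ^ (-(n : ℝ) / 2) * s ^ (-(n : ℝ) / 2) * exp (-r ^ 2 / (4 * s)) * (r ^ 2 / s)
      ≤ (4 * π) ^ (-(n : ℝ) / 2) * s ^ (-(n : ℝ) / 2) *
          (k ^ k * exp (-k) * (4 ^ k * s ^ k * r ^ (-(2 * k)))) * (r ^ 2 / s) := by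
        gcongr
    _ = _ := by ring

theorem heatKernel_normal_deriv_bound_general
    (n : ℕ) (R σ μ : ℝ) (hR : 0 < R)
    (hσ : σ ∈ Ioo (0 : ℝ) 1) (hμ₂ : μ < 1) :
    ∃ C₀ > 0, ∀ x ∈ sphere (0 : EuclideanSpace ℝ (Fin n)) R,
      ∀ y ∈ sphere (0 : EuclideanSpace ℝ (Fin n)) R, x ≠ y → ∀ t τ : ℝ, τ < t →
      |fderiv ℝ (fun z => heatKernel n (x - z) (t - τ)) y (R⁻¹ • y)| ≤
        C₀ * (t - τ) ^ (-μ) * ‖x - y‖ ^ (-((n : ℝ) + 1 - 2 * μ - σ)) := by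
  have hμ : μ < n / 2 + 1 := by linarith [(n.cast_nonneg : (0 : ℝ) ≤ n)]
  set C := (4 * π) ^ (-(n : ℝ) / 2) * (4 * ((n : ℝ) / 2 + 1 - μ)) ^ ((n : ℝ) / 2 + 1 - μ) *
    exp (-((n : ℝ) / 2 + 1 - μ))
  have hC : 0 < C := by
    have : 0 < (n : ℝ) / 2 + 1 - μ := by linarith
    positivity
  refine ⟨C * (2 * R) ^ (1 - σ) / (4 * R), by positivity, ?_⟩
  intro x hx y hy hxy t τ hτ
  have hs : 0 < t - τ := sub_pos.2 hτ
  have hr : 0 < ‖x - y‖ := norm_pos_iff.2 (sub_ne_zero.2 hxy)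
  have hr_le : ‖x - y‖ ≤ 2 * R := by
    have := norm_sub_le x y
    rw [mem_sphere_zero_iff_norm.1 hx, mem_sphere_zero_iff_norm.1 hy] at this
    linarith
  rw [fderiv_heatKernel_sub_normal hx hy hs, abs_neg,
    abs_of_nonneg (by have := heatKernel_nonneg n (x - y) (t - τ); positivity)]
  have hr_pow : ‖x - y‖ ^ (2 * μ - n) =
      ‖x - y‖ ^ (1 - σ) * ‖x - y‖ ^ (-((n : ℝ) + 1 - 2 * μ - σ)) := by
    rw [← rpow_add hr]; ring_nf
  calc heatKernel n (x - y) (t - τ) * (‖x - y‖ ^ 2 / (t - τ)) / (4 * R)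
      ≤ C * (t - τ) ^ (-μ) * ‖x - y‖ ^ (2 * μ - n) / (4 * R) := by
        gcongr ?_ / _; exact heatKernel_mul_norm_sq_div_le n hμ hs (sub_ne_zero.2 hxy)
    _ ≤ C * (t - τ) ^ (-μ) * ((2 * R) ^ (1 - σ) * ‖x - y‖ ^ (-((n : ℝ) + 1 - 2 * μ - σ)))
          / (4 * R) := by
        rw [hr_pow]; gcongr; linarith [hσ.2]
    _ = _ := by ring

/-- For every `σ ∈ (0,1)` and `1/2 < μ < 1` there is `C₀ > 0` such that
the normal derivative (in `y`, in the direction of the outward normal `y/R`) of the heat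
kernel satisfies `|∂Γ/∂η_y (x-y, t-τ)| ≤ C₀ (t-τ)^{-μ} |x-y|^{-(n+1-2μ-σ)}` for all
`x, y ∈ S_R` with `x ≠ y` and all `τ < t`. -/
theorem heatKernel_normal_deriv_bound
    (n : ℕ) (hn : 0 < n) (R σ μ : ℝ) (hR : 0 < R)
    (hσ : σ ∈ Ioo (0 : ℝ) 1) (hμ₁ : 1 / 2 < μ) (hμ₂ : μ < 1) :
    ∃ C₀ > 0, ∀ x ∈ sphere (0 : EuclideanSpace ℝ (Fin n)) R,
      ∀ y ∈ sphere (0 : EuclideanSpace ℝ (Fin n)) R, x ≠ y → ∀ t τ : ℝ, τ < t →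
      |fderiv ℝ (fun z => heatKernel n (x - z) (t - τ)) y (R⁻¹ • y)| ≤
        C₀ * (t - τ) ^ (-μ) * ‖x - y‖ ^ (-((n : ℝ) + 1 - 2 * μ - σ)) :=
  heatKernel_normal_deriv_bound_general n R σ μ hR hσ hμ₂
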